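/- Let μ, ν be probability measures on ℝ with finite second moments and equal first moments, and let p, q ≥ 0. Then sup_{ξ ≠ 0} |μ̂(pξ) μ̂(qξ) − ν̂(pξ) ν̂(qξ)| / ξ² ≤ (p² + q²) d₂(μ, ν); i.e., the Fourier-transformed gain operator of Maxwellian binary interactions is Lipschitz in the 2-Fourier metric with constant p² + q². -/

import Mathlib

open MeasureTheory

/-- The Fourier transform `μ̂(ξ) = ∫ e^{−iξv} dμ(v)` of a measure on `ℝ`. -/
noncomputable def fourierTr (μ : Measure ℝ) (ξ : ℝ) : ℂ :=
  ∫ v, Complex.exp (-(Complex.I * ξ * v)) ∂μ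

/-- The 2-Fourier metric `d₂(μ, ν) = sup_{ξ ≠ 0} |ν̂(ξ) − μ̂(ξ)|/ξ²`. -/
noncomputable def d2 (μ ν : Measure ℝ) : ℝ :=
  sSup {r : ℝ | ∃ ξ : ℝ, ξ ≠ 0 ∧ r = ‖fourierTr ν ξ - fourierTr μ ξ‖ / ξ ^ 2}

lemma hderiv (t : ℝ) : HasDerivAt (fun s : ℝ => Complex.exp (-(Complex.I * s)))
    (Complex.exp (-(Complex.I * t)) * (-Complex.I)) t := by
  have h1 : HasDerivAt (fun s : ℝ => -(Complex.I * (s : ℂ))) (-Complex.I) t := by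
    simpa [Pi.neg_def] using ((Complex.ofRealCLM.hasDerivAt (x := t)).const_mul Complex.I).neg
  simpa using h1.cexp

lemma expb1 (θ : ℝ) : ‖Complex.exp (-(Complex.I * θ)) - 1‖ ≤ |θ| := by
  have key : Complex.exp (-(Complex.I * θ)) - 1
      = ∫ t in (0:ℝ)..θ, Complex.exp (-(Complex.I * t)) * (-Complex.I) := by
    rw [intervalIntegral.integral_eq_sub_of_hasDerivAt (fun t _ => hderiv t)
      (Continuous.intervalIntegrable (by continuity) 0 θ)]
    simp
  rw [key]
  have := intervalIntegral.norm_integral_le_of_norm_le_const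
    (C := 1) (f := fun t : ℝ => Complex.exp (-(Complex.I * t)) * (-Complex.I)) (a := 0) (b := θ)
    (fun t _ => by
      rw [norm_mul]
      simp [Complex.norm_exp])
  simpa using this

lemma expb2 (θ : ℝ) : ‖Complex.exp (-(Complex.I * θ)) - 1 + Complex.I * θ‖ ≤ θ ^ 2 := by
  have hd : ∀ t : ℝ, HasDerivAt (fun s : ℝ => Complex.exp (-(Complex.I * s)) - 1 + Complex.I * s)
      (Complex.exp (-(Complex.I * t)) * (-Complex.I) + Complex.I) t := by
    intro t
    have h1 : HasDerivAt (fun s : ℝ => Complex.I * (s : ℂ)) Complex.I t := by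
      simpa using (Complex.ofRealCLM.hasDerivAt (x := t)).const_mul Complex.I
    simpa [Pi.add_def] using ((hderiv t).sub_const 1).add h1
  have key : Complex.exp (-(Complex.I * θ)) - 1 + Complex.I * θ
      = ∫ t in (0:ℝ)..θ, (Complex.exp (-(Complex.I * t)) * (-Complex.I) + Complex.I) := by
    rw [intervalIntegral.integral_eq_sub_of_hasDerivAt (fun t _ => hd t)
      (Continuous.intervalIntegrable (by continuity) 0 θ)]
    simp
  rw [key]
  have hb : ∀ t ∈ Set.uIoc (0:ℝ) θ,
      ‖Complex.exp (-(Complex.I * t)) * (-Complex.I) + Complex.I‖ ≤ |θ| := by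
    intro t ht
    have : Complex.exp (-(Complex.I * t)) * (-Complex.I) + Complex.I
        = (-Complex.I) * (Complex.exp (-(Complex.I * t)) - 1) := by ring
    rw [this, norm_mul]
    have ht' : |t| ≤ |θ| := by
      rcases Set.mem_uIcc.mp (Set.uIoc_subset_uIcc ht) with ⟨h1, h2⟩ | ⟨h1, h2⟩
      · rw [_root_.abs_of_nonneg h1]; exact h2.trans (le_abs_self θ)
      · rw [_root_.abs_of_nonpos h2]; exact (neg_le_neg h1).trans (neg_le_abs θ)
    calc ‖-Complex.I‖ * ‖Complex.exp (-(Complex.I * t)) - 1‖ ≤ 1 * |t| := by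
          simpa using expb1 t
      _ ≤ |θ| := by simpa using ht'
  have := intervalIntegral.norm_integral_le_of_norm_le_const hb
  calc _ ≤ |θ| * |θ - 0| := this
    _ = θ ^ 2 := by rw [sub_zero, ← abs_mul, ← sq, abs_sq]

lemma intExp (μ : Measure ℝ) [IsProbabilityMeasure μ] (ξ : ℝ) :
    Integrable (fun v : ℝ => Complex.exp (-(Complex.I * ξ * v))) μ := by
  apply Integrable.mono' (integrable_const 1)
  · exact (Continuous.aestronglyMeasurable (by continuity))
  · filter_upwards with v
    simp [Complex.norm_exp]

lemma norm_fourierTr_le (μ : Measure ℝ) [IsProbabilityMeasure μ] (ξ : ℝ) :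
    ‖fourierTr μ ξ‖ ≤ 1 := by
  calc ‖fourierTr μ ξ‖ ≤ ∫ v, ‖Complex.exp (-(Complex.I * ξ * v))‖ ∂μ :=
        norm_integral_le_integral_norm _
    _ ≤ 1 := by
        have : ∀ v : ℝ, ‖Complex.exp (-(Complex.I * ξ * v))‖ = 1 := fun v => by
          simp [Complex.norm_exp]
        simp [this]

lemma fourierTr_zero (μ : Measure ℝ) [IsProbabilityMeasure μ] : fourierTr μ 0 = 1 := by
  simp [fourierTr]

lemma intId (μ : Measure ℝ) [IsProbabilityMeasure μ]
    (hμ2 : Integrable (fun v : ℝ => v ^ 2) μ) : Integrable (fun v : ℝ => v) μ := by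
  apply Integrable.mono' (hμ2.add (integrable_const 1))
  · exact measurable_id.aestronglyMeasurable
  · filter_upwards with v
    simp only [Real.norm_eq_abs, Pi.add_apply]
    nlinarith [sq_nonneg (|v| - 1), _root_.sq_abs v, abs_nonneg v]

lemma integral_g (μ : Measure ℝ) [IsProbabilityMeasure μ]
    (hμ2 : Integrable (fun v : ℝ => v ^ 2) μ) (ξ : ℝ) :
    ∫ v, (Complex.exp (-(Complex.I * ξ * v)) - 1 + Complex.I * ξ * v) ∂μ
      = fourierTr μ ξ - 1 + Complex.I * ξ * ((∫ v, v ∂μ : ℝ) : ℂ) := by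
  have h1 := intExp μ ξ
  have h2 : Integrable (fun v : ℝ => Complex.I * ξ * (v : ℂ)) μ :=
    ((intId μ hμ2).ofReal).const_mul _
  have h3 : Integrable (fun v : ℝ => Complex.exp (-(Complex.I * ξ * v)) - 1) μ :=
    h1.sub (integrable_const 1)
  rw [integral_add h3 h2, integral_sub h1 (integrable_const 1), integral_const_mul]
  simp only [fourierTr, integral_const, measure_univ, probReal_univ, ENNReal.toReal_one, one_smul,
    integral_ofReal (𝕜 := ℂ) (f := fun v : ℝ => v)]
  have h4 : ∫ a, (a : ℂ) ∂μ = ((∫ v, v ∂μ : ℝ) : ℂ) := by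
    simpa using Complex.ofRealCLM.integral_comp_comm (intId μ hμ2)
  rw [h4]

lemma norm_int_g_le (μ : Measure ℝ) [IsProbabilityMeasure μ]
    (hμ2 : Integrable (fun v : ℝ => v ^ 2) μ) (ξ : ℝ) :
    ‖∫ v, (Complex.exp (-(Complex.I * ξ * v)) - 1 + Complex.I * ξ * v) ∂μ‖
      ≤ ξ ^ 2 * ∫ v, v ^ 2 ∂μ := by
  have hb : ∀ v : ℝ, ‖Complex.exp (-(Complex.I * ξ * v)) - 1 + Complex.I * ξ * v‖
      ≤ ξ ^ 2 * v ^ 2 := by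
    intro v
    have := expb2 (ξ * v)
    have he : -(Complex.I * ((ξ * v : ℝ) : ℂ)) = -(Complex.I * ξ * v) := by push_cast; ring
    have he2 : Complex.I * ((ξ * v : ℝ) : ℂ) = Complex.I * ξ * v := by push_cast; ring
    rw [he, he2] at this
    calc _ ≤ (ξ * v) ^ 2 := this
      _ = ξ ^ 2 * v ^ 2 := by ring
  calc ‖∫ v, (Complex.exp (-(Complex.I * ξ * v)) - 1 + Complex.I * ξ * v) ∂μ‖
      ≤ ∫ v, ξ ^ 2 * v ^ 2 ∂μ :=
        norm_integral_le_of_norm_le (hμ2.const_mul _) (Filter.Eventually.of_forall hb)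
    _ = ξ ^ 2 * ∫ v, v ^ 2 ∂μ := integral_const_mul _ _

lemma diff_bound (μ ν : Measure ℝ) [IsProbabilityMeasure μ] [IsProbabilityMeasure ν]
    (hμ2 : Integrable (fun v : ℝ => v ^ 2) μ) (hν2 : Integrable (fun v : ℝ => v ^ 2) ν)
    (hmean : ∫ v, v ∂μ = ∫ v, v ∂ν) (ξ : ℝ) :
    ‖fourierTr ν ξ - fourierTr μ ξ‖ ≤ (∫ v, v ^ 2 ∂μ + ∫ v, v ^ 2 ∂ν) * ξ ^ 2 := by
  have key : fourierTr ν ξ - fourierTr μ ξ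
      = (∫ v, (Complex.exp (-(Complex.I * ξ * v)) - 1 + Complex.I * ξ * v) ∂ν)
        - ∫ v, (Complex.exp (-(Complex.I * ξ * v)) - 1 + Complex.I * ξ * v) ∂μ := by
    rw [integral_g μ hμ2 ξ, integral_g ν hν2 ξ, hmean]; ring
  rw [key]
  calc _ ≤ ‖∫ v, (Complex.exp (-(Complex.I * ξ * v)) - 1 + Complex.I * ξ * v) ∂ν‖
        + ‖∫ v, (Complex.exp (-(Complex.I * ξ * v)) - 1 + Complex.I * ξ * v) ∂μ‖ :=
        norm_sub_le _ _
    _ ≤ ξ ^ 2 * ∫ v, v ^ 2 ∂ν + ξ ^ 2 * ∫ v, v ^ 2 ∂μ :=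
        add_le_add (norm_int_g_le ν hν2 ξ) (norm_int_g_le μ hμ2 ξ)
    _ = (∫ v, v ^ 2 ∂μ + ∫ v, v ^ 2 ∂ν) * ξ ^ 2 := by ring

lemma d2_nonneg (μ ν : Measure ℝ) : 0 ≤ d2 μ ν := by
  apply Real.sSup_nonneg
  rintro r ⟨ξ, hξ, rfl⟩
  positivity

lemma d2_key (μ ν : Measure ℝ) [IsProbabilityMeasure μ] [IsProbabilityMeasure ν]
    (hμ2 : Integrable (fun v : ℝ => v ^ 2) μ) (hν2 : Integrable (fun v : ℝ => v ^ 2) ν)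
    (hmean : ∫ v, v ∂μ = ∫ v, v ∂ν) (ξ : ℝ) :
    ‖fourierTr ν ξ - fourierTr μ ξ‖ ≤ d2 μ ν * ξ ^ 2 := by
  rcases eq_or_ne ξ 0 with rfl | hξ
  · simp [fourierTr_zero]
  · have hξ2 : (0 : ℝ) < ξ ^ 2 := by positivity
    have hbdd : BddAbove {r : ℝ | ∃ ξ : ℝ, ξ ≠ 0 ∧
        r = ‖fourierTr ν ξ - fourierTr μ ξ‖ / ξ ^ 2} := by
      refine ⟨∫ v, v ^ 2 ∂μ + ∫ v, v ^ 2 ∂ν, ?_⟩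
      rintro r ⟨η, hη, rfl⟩
      have hη2 : (0 : ℝ) < η ^ 2 := by positivity
      rw [div_le_iff₀ hη2]
      exact diff_bound μ ν hμ2 hν2 hmean η
    have hle : ‖fourierTr ν ξ - fourierTr μ ξ‖ / ξ ^ 2 ≤ d2 μ ν :=
      le_csSup hbdd ⟨ξ, hξ, rfl⟩
    rw [div_le_iff₀ hξ2] at hle
    linarith

/-- the Fourier-transformed gain operator of Maxwellian binary interactions,
`ξ ↦ μ̂(pξ) μ̂(qξ)`, is Lipschitz in the 2-Fourier metric with constant `p² + q²`:
`sup_{ξ ≠ 0} |μ̂(pξ) μ̂(qξ) − ν̂(pξ) ν̂(qξ)|/ξ² ≤ (p² + q²) d₂(μ, ν)`. -/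
theorem gain_operator_lipschitz (p q : ℝ) (hp : 0 ≤ p) (hq : 0 ≤ q)
    (μ ν : Measure ℝ) [IsProbabilityMeasure μ] [IsProbabilityMeasure ν]
    (hμ2 : Integrable (fun v : ℝ => v ^ 2) μ)
    (hν2 : Integrable (fun v : ℝ => v ^ 2) ν)
    (hmean : ∫ v, v ∂μ = ∫ v, v ∂ν) :
    sSup {r : ℝ | ∃ ξ : ℝ, ξ ≠ 0 ∧
        r = ‖fourierTr μ (p * ξ) * fourierTr μ (q * ξ)
              - fourierTr ν (p * ξ) * fourierTr ν (q * ξ)‖ / ξ ^ 2} ≤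
      (p ^ 2 + q ^ 2) * d2 μ ν := by
  apply Real.sSup_le
  · rintro r ⟨ξ, hξ, rfl⟩
    have hξ2 : (0 : ℝ) < ξ ^ 2 := by positivity
    rw [div_le_iff₀ hξ2]
    set A := fourierTr μ (p * ξ)
    set B := fourierTr μ (q * ξ)
    set C := fourierTr ν (p * ξ)
    set D := fourierTr ν (q * ξ)
    have h1 : ‖B - D‖ ≤ d2 μ ν * (q * ξ) ^ 2 := by
      rw [norm_sub_rev]
      exact d2_key μ ν hμ2 hν2 hmean (q * ξ)
    have h2 : ‖A - C‖ ≤ d2 μ ν * (p * ξ) ^ 2 := by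
      rw [norm_sub_rev]
      exact d2_key μ ν hμ2 hν2 hmean (p * ξ)
    calc ‖A * B - C * D‖ = ‖A * (B - D) + (A - C) * D‖ := by ring_nf
      _ ≤ ‖A * (B - D)‖ + ‖(A - C) * D‖ := norm_add_le _ _
      _ = ‖A‖ * ‖B - D‖ + ‖A - C‖ * ‖D‖ := by rw [norm_mul, norm_mul]
      _ ≤ 1 * (d2 μ ν * (q * ξ) ^ 2) + (d2 μ ν * (p * ξ) ^ 2) * 1 := by
          apply add_le_add
          · exact mul_le_mul (norm_fourierTr_le μ _) h1 (norm_nonneg _) zero_le_one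
          · exact mul_le_mul h2 (norm_fourierTr_le ν _) (norm_nonneg _)
              (mul_nonneg (d2_nonneg μ ν) (sq_nonneg _))
      _ = (p ^ 2 + q ^ 2) * d2 μ ν * ξ ^ 2 := by ring
  · exact mul_nonneg (by positivity) (d2_nonneg μ ν)
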